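/- For 0 < k < 1, the function g(u) = 2·zn(u) − k²·sn(u)·cn(u)/dn(u) satisfies g(0) = g(K/2) = 0 and g''(u) = −(2k⁴·sn(u)·cn(u)/dn³(u))·(cn(u)·dn(u) + k'·sn(u))·(cn(u)·dn(u) − k'·sn(u)) < 0 on (0, K/2); consequently g(u) > 0 on (0, K/2). -/

import Mathlib

/-!
The first integrals `sn² + cn² = 1` and `dn² = 1 - k² sn²` keep every solution of the Jacobi
system in the unit ball, so the system has a unique solution. With the amplitude `am = ∫ dn` one
has `sn = sin ∘ am`, `cn = cos ∘ am` and `F(am u) = u`, hence `am K = π/2`; uniqueness then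
gives the reflection `dn u · dn (K - u) = k'`, which makes `zn u + zn (K - u) - k² sn cn / dn`
constant and so `g (K/2) = 0`. Differentiating twice, `g'' = -2k² sn cn (dn⁴ - k'²) / dn³`,
which factors as stated; it is negative on `(0, K/2)` because `cn dn - k' sn` decreases to `0`
at `K/2`, and a strictly concave function vanishing at both endpoints is positive in between.
-/

open Real intervalIntegral

/-- Complete elliptic integral of the first kind. -/
noncomputable def ellK (k : ℝ) : ℝ :=
  ∫ θ in (0:ℝ)..(π/2), 1 / Real.sqrt (1 - k^2 * (Real.sin θ)^2)

/-- Complete elliptic integral of the second kind. -/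
noncomputable def ellE (k : ℝ) : ℝ :=
  ∫ θ in (0:ℝ)..(π/2), Real.sqrt (1 - k^2 * (Real.sin θ)^2)

open Set

theorem one_sub_sq_mul_sq_pos {k x : ℝ} (hk : k ^ 2 < 1) (hx : x ^ 2 ≤ 1) :
    0 < 1 - k ^ 2 * x ^ 2 := by
  nlinarith [sq_nonneg k]

theorem eq_of_hasDerivAt_eq_zero {f f' : ℝ → ℝ} (hf : ∀ u, HasDerivAt f (f' u) u)
    (hf' : ∀ u, f' u = 0) (x y : ℝ) : f x = f y :=
  is_const_of_deriv_eq_zero (fun u => (hf u).differentiableAt)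
    (fun u => (hf u).deriv.trans (hf' u)) x y

theorem min_lt_of_deriv2_neg {f : ℝ → ℝ} {a b x : ℝ} (hf : ContinuousOn f (Icc a b))
    (hf'' : ∀ y ∈ Ioo a b, deriv^[2] f y < 0) (hx : x ∈ Ioo a b) : min (f a) (f b) < f x := by
  have hab : a < b := hx.1.trans hx.2
  have hconc := strictConcaveOn_of_deriv2_neg (convex_Icc a b) hf (by rwa [interior_Icc])
  exact hconc.lt_on_openSegment (left_mem_Icc.2 hab.le) (right_mem_Icc.2 hab.le) hab.ne
    (by rwa [openSegment_eq_Ioo hab])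

structure JacobiEllipticSystem (k : ℝ) (sn cn dn : ℝ → ℝ) : Prop where
  sn_zero : sn 0 = 0
  cn_zero : cn 0 = 1
  dn_zero : dn 0 = 1
  hasDerivAt_sn : ∀ u, HasDerivAt sn (cn u * dn u) u
  hasDerivAt_cn : ∀ u, HasDerivAt cn (-(sn u * dn u)) u
  hasDerivAt_dn : ∀ u, HasDerivAt dn (-(k ^ 2 * sn u * cn u)) u

namespace JacobiEllipticSystem

variable {k : ℝ} {sn cn dn : ℝ → ℝ}

theorem continuous_dn (h : JacobiEllipticSystem k sn cn dn) : Continuous dn :=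
  continuous_iff_continuousAt.2 fun u => (h.hasDerivAt_dn u).continuousAt

theorem sn_sq_add_cn_sq (h : JacobiEllipticSystem k sn cn dn) (u : ℝ) :
    sn u ^ 2 + cn u ^ 2 = 1 := by
  have hd (u : ℝ) := ((h.hasDerivAt_sn u).fun_pow 2).fun_add ((h.hasDerivAt_cn u).fun_pow 2)
  have hconst := eq_of_hasDerivAt_eq_zero hd (fun u => by ring) u 0
  simpa [h.sn_zero, h.cn_zero] using hconst

theorem dn_sq (h : JacobiEllipticSystem k sn cn dn) (u : ℝ) :
    dn u ^ 2 = 1 - k ^ 2 * sn u ^ 2 := by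
  have hd (u : ℝ) := ((h.hasDerivAt_dn u).fun_pow 2).fun_add
    (((h.hasDerivAt_sn u).fun_pow 2).const_mul (k ^ 2))
  have hconst := eq_of_hasDerivAt_eq_zero hd (fun u => by ring) u 0
  simp only [h.sn_zero, h.dn_zero] at hconst
  linarith

theorem norm_le_one (h : JacobiEllipticSystem k sn cn dn) (u : ℝ) :
    ‖(sn u, cn u, dn u)‖ ≤ 1 := by
  have hsc := h.sn_sq_add_cn_sq u
  have hd := h.dn_sq u
  simp only [norm_prod_le_iff, Real.norm_eq_abs, ← sq_le_one_iff_abs_le_one]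
  refine ⟨by nlinarith, by nlinarith, by nlinarith⟩

/-- The right-hand side is smooth, and by the first integrals every solution stays in the unit
ball, where it is therefore Lipschitz. -/
theorem unique {sn' cn' dn' : ℝ → ℝ} (h : JacobiEllipticSystem k sn cn dn)
    (h' : JacobiEllipticSystem k sn' cn' dn') : sn = sn' ∧ cn = cn' ∧ dn = dn' := by
  set v : ℝ × ℝ × ℝ → ℝ × ℝ × ℝ := fun p =>
    (p.2.1 * p.2.2, -(p.1 * p.2.2), -(k ^ 2 * p.1 * p.2.1))
  obtain ⟨L, hL⟩ : ∃ L, LipschitzOnWith L v (Metric.closedBall 0 1) :=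
    (ContDiff.locallyLipschitz (by fun_prop : ContDiff ℝ 1 v)).locallyLipschitzOn
      |>.exists_lipschitzOnWith_of_compact (isCompact_closedBall 0 1)
  have hsol {s c d : ℝ → ℝ} (hs : JacobiEllipticSystem k s c d) (t : ℝ) :
      HasDerivAt (fun u => (s u, c u, d u)) (v (s t, c t, d t)) t ∧
        (s t, c t, d t) ∈ Metric.closedBall 0 1 :=
    ⟨(hs.hasDerivAt_sn t).prodMk ((hs.hasDerivAt_cn t).prodMk (hs.hasDerivAt_dn t)),
      mem_closedBall_zero_iff.2 (hs.norm_le_one t)⟩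
  have heq := ODE_solution_unique_univ (v := fun _ => v) (t₀ := 0) (fun _ => hL)
    (hsol h) (hsol h')
    (by simp [h.sn_zero, h.cn_zero, h.dn_zero, h'.sn_zero, h'.cn_zero, h'.dn_zero])
  exact ⟨funext fun u => congrArg (·.1) (congrFun heq u),
    funext fun u => congrArg (·.2.1) (congrFun heq u),
    funext fun u => congrArg (·.2.2) (congrFun heq u)⟩

theorem dn_pos (h : JacobiEllipticSystem k sn cn dn) (hk : k ^ 2 < 1) (u : ℝ) : 0 < dn u := by
  have hne (c : ℝ) : dn c ≠ 0 := by
    have hsq : 0 < dn c ^ 2 := h.dn_sq c ▸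
      one_sub_sq_mul_sq_pos hk (by nlinarith [h.sn_sq_add_cn_sq c])
    exact fun hc => by simp [hc] at hsq
  by_contra! hle
  obtain ⟨c, -, hc⟩ := intermediate_value_uIcc (a := 0) (b := u) h.continuous_dn.continuousOn
    (mem_uIcc.2 (Or.inr ⟨hle, h.dn_zero ▸ zero_le_one⟩))
  exact hne c hc

theorem reflect (h : JacobiEllipticSystem k sn cn dn) (hk : k ^ 2 < 1) {K : ℝ}
    (hsnK : sn K = 1) (hcnK : cn K = 0) (hdnK : dn K = √(1 - k ^ 2)) :
    JacobiEllipticSystem k (fun u => cn (K - u) / dn (K - u))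
      (fun u => √(1 - k ^ 2) * sn (K - u) / dn (K - u))
      (fun u => √(1 - k ^ 2) / dn (K - u)) := by
  have hk' : 0 < √(1 - k ^ 2) := Real.sqrt_pos.2 (by linarith)
  have hk'sq : √(1 - k ^ 2) ^ 2 = 1 - k ^ 2 := Real.sq_sqrt (by linarith)
  have hne (u : ℝ) := (h.dn_pos hk (K - u)).ne'
  refine ⟨by simp [hcnK], by simp [hsnK, hdnK, hk'.ne'], by simp [hdnK, hk'.ne'], fun u => ?_,
    fun u => ?_, fun u => ?_⟩
  · refine (((h.hasDerivAt_cn _).div (h.hasDerivAt_dn _) (hne u)).comp_const_sub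
      K u).congr_deriv ?_
    field_simp [hne u]
    linear_combination sn (K - u) * h.dn_sq (K - u) - (k ^ 2 * sn (K - u)) *
      h.sn_sq_add_cn_sq (K - u) - sn (K - u) * hk'sq
  · refine ((((h.hasDerivAt_sn _).const_mul _).div (h.hasDerivAt_dn _) (hne u)).comp_const_sub
      K u).congr_deriv ?_
    field_simp [hne u]
    linear_combination (-cn (K - u)) * h.dn_sq (K - u)
  · refine (((hasDerivAt_const _ _).div (h.hasDerivAt_dn _) (hne u)).comp_const_sub
      K u).congr_deriv ?_
    field_simp [hne u]
    ring

end JacobiEllipticSystem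

noncomputable def amplitude (dn : ℝ → ℝ) (u : ℝ) : ℝ := ∫ v in (0:ℝ)..u, dn v

@[simp]
theorem amplitude_zero (dn : ℝ → ℝ) : amplitude dn 0 = 0 := integral_same

/-- The incomplete elliptic integral of the first kind `F(φ, k)`, so that `K(k) = F(π/2, k)`. -/
noncomputable def ellF (k φ : ℝ) : ℝ := ∫ θ in (0:ℝ)..φ, 1 / √(1 - k ^ 2 * sin θ ^ 2)

section EllipticIntegrals

variable {k : ℝ}

theorem hasDerivAt_ellF (hk : k ^ 2 < 1) (φ : ℝ) :
    HasDerivAt (ellF k) (1 / √(1 - k ^ 2 * sin φ ^ 2)) φ := by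
  have hcont : Continuous fun θ => 1 / √(1 - k ^ 2 * sin θ ^ 2) :=
    continuous_const.div (by fun_prop) fun θ =>
      (Real.sqrt_pos.2 (one_sub_sq_mul_sq_pos hk (sin_sq_le_one θ))).ne'
  exact (hcont.integral_hasStrictDerivAt 0 φ).hasDerivAt

theorem strictMono_ellF (hk : k ^ 2 < 1) : StrictMono (ellF k) :=
  strictMono_of_deriv_pos fun φ => (hasDerivAt_ellF hk φ).deriv ▸
    one_div_pos.2 (Real.sqrt_pos.2 (one_sub_sq_mul_sq_pos hk (sin_sq_le_one φ)))

theorem ellK_pos (hk : k ^ 2 < 1) : 0 < ellK k := by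
  have h := strictMono_ellF hk (half_pos pi_pos)
  rwa [ellF, integral_same] at h

end EllipticIntegrals

namespace JacobiEllipticSystem

variable {k : ℝ} {sn cn dn : ℝ → ℝ}

theorem hasDerivAt_amplitude (h : JacobiEllipticSystem k sn cn dn) (u : ℝ) :
    HasDerivAt (amplitude dn) (dn u) u :=
  (h.continuous_dn.integral_hasStrictDerivAt 0 u).hasDerivAt

theorem sn_cn_eq_sin_cos_amplitude (h : JacobiEllipticSystem k sn cn dn) (u : ℝ) :
    sn u = sin (amplitude dn u) ∧ cn u = cos (amplitude dn u) := by
  have hd (u : ℝ) :=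
    (((h.hasDerivAt_sn u).fun_sub (h.hasDerivAt_amplitude u).sin).fun_pow 2).fun_add
      (((h.hasDerivAt_cn u).fun_sub (h.hasDerivAt_amplitude u).cos).fun_pow 2)
  have hconst := eq_of_hasDerivAt_eq_zero hd (fun u => by ring) u 0
  simp only [amplitude_zero, h.sn_zero, h.cn_zero, sin_zero, cos_zero, sub_self] at hconst
  constructor <;> nlinarith [sq_nonneg (sn u - sin (amplitude dn u)),
    sq_nonneg (cn u - cos (amplitude dn u))]

theorem dn_eq_sqrt_amplitude (h : JacobiEllipticSystem k sn cn dn) (hk : k ^ 2 < 1) (u : ℝ) :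
    dn u = √(1 - k ^ 2 * sin (amplitude dn u) ^ 2) := by
  rw [← (h.sn_cn_eq_sin_cos_amplitude u).1, ← h.dn_sq, Real.sqrt_sq (h.dn_pos hk u).le]

theorem ellF_amplitude (h : JacobiEllipticSystem k sn cn dn) (hk : k ^ 2 < 1) (u : ℝ) :
    ellF k (amplitude dn u) = u := by
  have hd (u : ℝ) := ((hasDerivAt_ellF hk _).comp u (h.hasDerivAt_amplitude u)).sub
    (hasDerivAt_id u)
  have hd0 (u : ℝ) : 1 / √(1 - k ^ 2 * sin (amplitude dn u) ^ 2) * dn u - 1 = 0 := by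
    rw [← h.dn_eq_sqrt_amplitude hk, one_div_mul_cancel (h.dn_pos hk u).ne', sub_self]
  have hconst := eq_of_hasDerivAt_eq_zero hd hd0 u 0
  simpa [ellF, sub_eq_zero] using hconst

theorem amplitude_ellK (h : JacobiEllipticSystem k sn cn dn) (hk : k ^ 2 < 1) :
    amplitude dn (ellK k) = π / 2 :=
  (strictMono_ellF hk).injective (h.ellF_amplitude hk _)

theorem sn_ellK (h : JacobiEllipticSystem k sn cn dn) (hk : k ^ 2 < 1) : sn (ellK k) = 1 := by
  rw [(h.sn_cn_eq_sin_cos_amplitude _).1, h.amplitude_ellK hk, sin_pi_div_two]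

theorem cn_ellK (h : JacobiEllipticSystem k sn cn dn) (hk : k ^ 2 < 1) : cn (ellK k) = 0 := by
  rw [(h.sn_cn_eq_sin_cos_amplitude _).2, h.amplitude_ellK hk, cos_pi_div_two]

theorem dn_ellK (h : JacobiEllipticSystem k sn cn dn) (hk : k ^ 2 < 1) :
    dn (ellK k) = √(1 - k ^ 2) := by
  rw [h.dn_eq_sqrt_amplitude hk, h.amplitude_ellK hk, sin_pi_div_two, one_pow, mul_one]

theorem amplitude_mem_Ioo (h : JacobiEllipticSystem k sn cn dn) (hk : k ^ 2 < 1) {u : ℝ}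
    (hu : u ∈ Ioo 0 (ellK k)) : amplitude dn u ∈ Ioo 0 (π / 2) := by
  have hmono : StrictMono (amplitude dn) :=
    strictMono_of_deriv_pos fun u => (h.hasDerivAt_amplitude u).deriv ▸ h.dn_pos hk u
  have h0 := hmono hu.1
  have h1 := hmono hu.2
  rw [amplitude_zero] at h0
  rw [h.amplitude_ellK hk] at h1
  exact ⟨h0, h1⟩

theorem sn_pos (h : JacobiEllipticSystem k sn cn dn) (hk : k ^ 2 < 1) {u : ℝ}
    (hu : u ∈ Ioo 0 (ellK k)) : 0 < sn u := by
  obtain ⟨h0, h1⟩ := h.amplitude_mem_Ioo hk hu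
  rw [(h.sn_cn_eq_sin_cos_amplitude u).1]
  exact sin_pos_of_pos_of_lt_pi h0 (by linarith [pi_pos])

theorem cn_pos (h : JacobiEllipticSystem k sn cn dn) (hk : k ^ 2 < 1) {u : ℝ}
    (hu : u ∈ Ioo 0 (ellK k)) : 0 < cn u := by
  obtain ⟨h0, h1⟩ := h.amplitude_mem_Ioo hk hu
  rw [(h.sn_cn_eq_sin_cos_amplitude u).2]
  exact cos_pos_of_mem_Ioo ⟨by linarith [pi_pos], h1⟩

/-- `E(k) = ∫₀ᴷ dn²`, by the substitution `θ = am u`, `dθ = dn u du`. -/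
theorem integral_dn_sq_ellK (h : JacobiEllipticSystem k sn cn dn) (hk : k ^ 2 < 1) :
    ∫ u in (0:ℝ)..ellK k, dn u ^ 2 = ellE k := by
  have hsubst := integral_deriv_smul_comp (a := 0) (b := ellK k)
    (g := fun θ => √(1 - k ^ 2 * sin θ ^ 2)) (fun u _ => h.hasDerivAt_amplitude u)
    h.continuous_dn.continuousOn (by fun_prop)
  have hint : (fun u => dn u • ((fun θ => √(1 - k ^ 2 * sin θ ^ 2)) ∘ amplitude dn) u) =
      fun u => dn u ^ 2 := by
    funext u
    rw [smul_eq_mul, Function.comp_apply, ← h.dn_eq_sqrt_amplitude hk, sq]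
  rwa [hint, amplitude_zero, h.amplitude_ellK hk] at hsubst

end JacobiEllipticSystem

noncomputable def jacobiZn (k : ℝ) (dn : ℝ → ℝ) (u : ℝ) : ℝ :=
  (∫ v in (0:ℝ)..u, dn v ^ 2) - u * ellE k / ellK k

@[simp]
theorem jacobiZn_zero (k : ℝ) (dn : ℝ → ℝ) : jacobiZn k dn 0 = 0 := by
  simp [jacobiZn]

/-- The function `g` of the theorem. -/
noncomputable def zetaGap (k : ℝ) (sn cn dn : ℝ → ℝ) (u : ℝ) : ℝ :=
  2 * jacobiZn k dn u - k ^ 2 * sn u * cn u / dn u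

namespace JacobiEllipticSystem

variable {k : ℝ} {sn cn dn : ℝ → ℝ}

theorem dn_mul_dn_ellK_sub (h : JacobiEllipticSystem k sn cn dn) (hk : k ^ 2 < 1) (u : ℝ) :
    dn u * dn (ellK k - u) = √(1 - k ^ 2) := by
  have hdn := congrFun (h.unique (h.reflect hk (h.sn_ellK hk) (h.cn_ellK hk) (h.dn_ellK hk))).2.2 u
  rw [hdn, div_mul_cancel₀ _ (h.dn_pos hk _).ne']

theorem cn_mul_dn_half_ellK (h : JacobiEllipticSystem k sn cn dn) (hk : k ^ 2 < 1) :
    cn (ellK k / 2) * dn (ellK k / 2) = √(1 - k ^ 2) * sn (ellK k / 2) := by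
  have hcn := congrFun (h.unique (h.reflect hk (h.sn_ellK hk) (h.cn_ellK hk) (h.dn_ellK hk))).2.1
    (ellK k / 2)
  rw [hcn, sub_half, div_mul_cancel₀ _ (h.dn_pos hk _).ne']

theorem hasDerivAt_jacobiZn (h : JacobiEllipticSystem k sn cn dn) (u : ℝ) :
    HasDerivAt (jacobiZn k dn) (dn u ^ 2 - ellE k / ellK k) u := by
  have hint := ((h.continuous_dn.pow 2).integral_hasStrictDerivAt 0 u).hasDerivAt
  exact (hint.sub (((hasDerivAt_id u).mul_const _).div_const _)).congr_deriv (by simp)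

theorem jacobiZn_ellK (h : JacobiEllipticSystem k sn cn dn) (hk : k ^ 2 < 1) :
    jacobiZn k dn (ellK k) = 0 := by
  rw [jacobiZn, h.integral_dn_sq_ellK hk, mul_div_cancel_left₀ _ (ellK_pos hk).ne', sub_self]

theorem hasDerivAt_sn_mul_cn_div_dn (h : JacobiEllipticSystem k sn cn dn) (hk : k ^ 2 < 1)
    (u : ℝ) : HasDerivAt (fun u => k ^ 2 * sn u * cn u / dn u)
      (dn u ^ 2 - (1 - k ^ 2) / dn u ^ 2) u := by
  have hne := (h.dn_pos hk u).ne'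
  refine ((((h.hasDerivAt_sn u).const_mul _).fun_mul (h.hasDerivAt_cn u)).fun_div
    (h.hasDerivAt_dn u) hne).congr_deriv ?_
  field_simp
  linear_combination (k ^ 2 * dn u ^ 2 + k ^ 4 * sn u ^ 2) * h.sn_sq_add_cn_sq u +
    (-dn u ^ 2 + k ^ 2 - k ^ 2 * sn u ^ 2 - 1) * h.dn_sq u

theorem hasDerivAt_zetaGap (h : JacobiEllipticSystem k sn cn dn) (hk : k ^ 2 < 1) (u : ℝ) :
    HasDerivAt (zetaGap k sn cn dn) (dn u ^ 2 + (1 - k ^ 2) / dn u ^ 2 - 2 * (ellE k / ellK k))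
      u :=
  (((h.hasDerivAt_jacobiZn u).const_mul 2).sub (h.hasDerivAt_sn_mul_cn_div_dn hk u)).congr_deriv
    (by ring)

theorem hasDerivAt_deriv_zetaGap (h : JacobiEllipticSystem k sn cn dn) (hk : k ^ 2 < 1)
    (u : ℝ) : HasDerivAt (deriv (zetaGap k sn cn dn))
      (-(2 * k ^ 4 * sn u * cn u / dn u ^ 3) *
        ((cn u * dn u + √(1 - k ^ 2) * sn u) * (cn u * dn u - √(1 - k ^ 2) * sn u))) u := by
  have hne := (h.dn_pos hk u).ne'
  have hk'sq : √(1 - k ^ 2) ^ 2 = 1 - k ^ 2 := Real.sq_sqrt (by linarith)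
  have hdn2 := (h.hasDerivAt_dn u).fun_pow 2
  rw [funext fun u => (h.hasDerivAt_zetaGap hk u).deriv]
  refine ((hdn2.fun_add ((hasDerivAt_const u (1 - k ^ 2)).fun_div hdn2
    (pow_ne_zero 2 hne))).sub_const _).congr_deriv ?_
  have hprod : k ^ 2 * ((cn u * dn u + √(1 - k ^ 2) * sn u) *
      (cn u * dn u - √(1 - k ^ 2) * sn u)) = dn u ^ 4 - (1 - k ^ 2) := by
    linear_combination (-(dn u ^ 2 + 1 - k ^ 2)) * h.dn_sq u +
      k ^ 2 * dn u ^ 2 * h.sn_sq_add_cn_sq u - k ^ 2 * sn u ^ 2 * hk'sq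
  field_simp
  linear_combination 2 * dn u * k ^ 2 * sn u * cn u * hprod

theorem zetaGap_zero (h : JacobiEllipticSystem k sn cn dn) : zetaGap k sn cn dn 0 = 0 := by
  simp [zetaGap, h.sn_zero]

/-- `u ↦ zn u + zn (K - u) - k² sn u cn u / dn u` is constant, since `dn u dn (K - u) = k'`;
comparing its values at `0` and `K / 2` gives `g (K / 2) = 0`. -/
theorem zetaGap_half_ellK (h : JacobiEllipticSystem k sn cn dn) (hk : k ^ 2 < 1) :
    zetaGap k sn cn dn (ellK k / 2) = 0 := by
  have hk'sq : √(1 - k ^ 2) ^ 2 = 1 - k ^ 2 := Real.sq_sqrt (by linarith)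
  have hd (u : ℝ) := ((h.hasDerivAt_jacobiZn u).fun_add
    ((h.hasDerivAt_jacobiZn (ellK k - u)).comp_const_sub (ellK k) u)).fun_sub
      (h.hasDerivAt_sn_mul_cn_div_dn hk u)
  have hd0 (u : ℝ) : dn u ^ 2 - ellE k / ellK k + -(dn (ellK k - u) ^ 2 - ellE k / ellK k) -
      (dn u ^ 2 - (1 - k ^ 2) / dn u ^ 2) = 0 := by
    have hne := (h.dn_pos hk u).ne'
    field_simp
    linear_combination -hk'sq - (dn u * dn (ellK k - u) + √(1 - k ^ 2)) *
      h.dn_mul_dn_ellK_sub hk u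
  have hconst := eq_of_hasDerivAt_eq_zero hd hd0 (ellK k / 2) 0
  simp only [sub_zero, sub_half, h.jacobiZn_ellK hk, jacobiZn_zero, h.sn_zero] at hconst
  simp only [zetaGap]
  linear_combination hconst

theorem strictAntiOn_cn_mul_dn_sub (h : JacobiEllipticSystem k sn cn dn) (hk : k ^ 2 < 1) :
    StrictAntiOn (fun u => cn u * dn u - √(1 - k ^ 2) * sn u) (Icc 0 (ellK k)) := by
  have hd (u : ℝ) := ((h.hasDerivAt_cn u).fun_mul (h.hasDerivAt_dn u)).fun_sub
    ((h.hasDerivAt_sn u).const_mul √(1 - k ^ 2))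
  refine strictAntiOn_of_deriv_neg (convex_Icc _ _)
    (fun u _ => (hd u).continuousAt.continuousWithinAt) fun u hu => ?_
  rw [interior_Icc] at hu
  have hs := h.sn_pos hk hu
  have hc := h.cn_pos hk hu
  have hdn := h.dn_pos hk u
  rw [(hd u).deriv]
  nlinarith [mul_pos (mul_pos hs hdn) hdn,
    mul_nonneg (mul_nonneg (sq_nonneg k) hs.le) (sq_nonneg (cn u)),
    mul_nonneg (Real.sqrt_nonneg (1 - k ^ 2)) (mul_pos hc hdn).le]

theorem cn_mul_dn_sub_pos (h : JacobiEllipticSystem k sn cn dn) (hk : k ^ 2 < 1) {u : ℝ}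
    (hu : u ∈ Ioo 0 (ellK k / 2)) : 0 < cn u * dn u - √(1 - k ^ 2) * sn u := by
  have hK := ellK_pos hk
  have hlt := h.strictAntiOn_cn_mul_dn_sub hk ⟨hu.1.le, by linarith [hu.2]⟩
    ⟨by linarith, by linarith⟩ hu.2
  simpa only [h.cn_mul_dn_half_ellK hk, sub_self] using hlt

theorem deriv_deriv_zetaGap_neg (h : JacobiEllipticSystem k sn cn dn) (hk0 : k ≠ 0)
    (hk : k ^ 2 < 1) {u : ℝ} (hu : u ∈ Ioo 0 (ellK k / 2)) :
    deriv (deriv (zetaGap k sn cn dn)) u < 0 := by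
  have huK : u ∈ Ioo 0 (ellK k) := ⟨hu.1, by linarith [hu.2, ellK_pos hk]⟩
  have hs := h.sn_pos hk huK
  have hc := h.cn_pos hk huK
  have hdn := h.dn_pos hk u
  rw [(h.hasDerivAt_deriv_zetaGap hk u).deriv, neg_mul, neg_lt_zero]
  refine mul_pos (by positivity) (mul_pos ?_ (h.cn_mul_dn_sub_pos hk hu))
  exact add_pos_of_pos_of_nonneg (mul_pos hc hdn) (mul_nonneg (Real.sqrt_nonneg _) hs.le)

end JacobiEllipticSystem

theorem g_second_deriv_neg (k : ℝ) (hk0 : 0 < k) (hk1 : k < 1)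
    (sn cn dn : ℝ → ℝ)
    (hsn0 : sn 0 = 0) (hcn0 : cn 0 = 1) (hdn0 : dn 0 = 1)
    (hsn : ∀ u : ℝ, HasDerivAt sn (cn u * dn u) u)
    (hcn : ∀ u : ℝ, HasDerivAt cn (-(sn u * dn u)) u)
    (hdn : ∀ u : ℝ, HasDerivAt dn (-(k^2 * sn u * cn u)) u) :
    (fun u => 2 * ((∫ v in (0:ℝ)..u, (dn v)^2) - u * ellE k / ellK k)
        - k^2 * sn u * cn u / dn u) 0 = 0 ∧
    (fun u => 2 * ((∫ v in (0:ℝ)..u, (dn v)^2) - u * ellE k / ellK k)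
        - k^2 * sn u * cn u / dn u) (ellK k / 2) = 0 ∧
    (∀ u ∈ Set.Ioo 0 (ellK k / 2),
      deriv (deriv (fun u => 2 * ((∫ v in (0:ℝ)..u, (dn v)^2) - u * ellE k / ellK k)
          - k^2 * sn u * cn u / dn u)) u =
        -(2 * k^4 * sn u * cn u / (dn u)^3) *
          ((cn u * dn u + Real.sqrt (1 - k^2) * sn u) *
            (cn u * dn u - Real.sqrt (1 - k^2) * sn u)) ∧
      deriv (deriv (fun u => 2 * ((∫ v in (0:ℝ)..u, (dn v)^2) - u * ellE k / ellK k)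
          - k^2 * sn u * cn u / dn u)) u < 0) ∧
    ∀ u ∈ Set.Ioo 0 (ellK k / 2),
      0 < 2 * ((∫ v in (0:ℝ)..u, (dn v)^2) - u * ellE k / ellK k)
        - k^2 * sn u * cn u / dn u := by
  have h : JacobiEllipticSystem k sn cn dn := ⟨hsn0, hcn0, hdn0, hsn, hcn, hdn⟩
  have hk : k ^ 2 < 1 := by nlinarith
  have hg0 := h.zetaGap_zero
  have hgK := h.zetaGap_half_ellK hk
  refine ⟨hg0, hgK, fun u hu => ⟨(h.hasDerivAt_deriv_zetaGap hk u).deriv,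
    h.deriv_deriv_zetaGap_neg hk0.ne' hk hu⟩, fun u hu => ?_⟩
  have hmin := min_lt_of_deriv2_neg
    (fun x _ => (h.hasDerivAt_zetaGap hk x).continuousAt.continuousWithinAt)
    (fun x hx => h.deriv_deriv_zetaGap_neg hk0.ne' hk hx) hu
  rwa [hg0, hgK, min_self] at hmin
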